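/- arXiv:2103.03531 — 7 statements merged into one kernel-verified Lean document; each statement's English description precedes it below -/
import Mathlib

section
/- Let T > 0, X ⊆ ℝⁿ, U ⊆ ℝᵐ, X_T ⊆ X, and f : ℝ × ℝⁿ × ℝᵐ → ℝⁿ. Suppose v : ℝ × ℝⁿ → ℝ is continuously differentiable and satisfies (Lv)(t,x,u) ≤ 0 for all (t,x,u) ∈ [0,T] × X × U, and v(T,x) ≥ 0 for all x ∈ X_T. Then v(0, x₀) ≥ 0 for every x₀ ∈ X₀; equivalently, the set {x ∈ ℝⁿ : v(0,x) ≥ 0} contains the region of attraction X₀. -/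
/-- The region of attraction X₀: points x₀ ∈ X from which some admissible
trajectory (ẋ = f(t,x,u), x(t) ∈ X, u(t) ∈ U on [0,T]) starts at x₀ and
reaches the target set X_T at time T. -/
def regionOfAttraction {n m : ℕ} (T : ℝ) (X : Set (Fin n → ℝ))
    (U : Set (Fin m → ℝ)) (XT : Set (Fin n → ℝ))
    (f : ℝ → (Fin n → ℝ) → (Fin m → ℝ) → (Fin n → ℝ)) : Set (Fin n → ℝ) :=
  {x₀ | x₀ ∈ X ∧ ∃ (u : ℝ → (Fin m → ℝ)) (x : ℝ → (Fin n → ℝ)),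
    x 0 = x₀ ∧
    (∀ t ∈ Set.Icc (0 : ℝ) T, HasDerivAt x (f t (x t) (u t)) t) ∧
    (∀ t ∈ Set.Icc (0 : ℝ) T, x t ∈ X) ∧
    (∀ t ∈ Set.Icc (0 : ℝ) T, u t ∈ U) ∧
    x T ∈ XT}

/-- If v is C¹ with nonpositive Lie derivative
Dv(t,x)(1, f(t,x,u)) ≤ 0 on [0,T] × X × U and v(T,·) ≥ 0 on X_T, then
v(0,·) ≥ 0 on the region of attraction X₀, i.e.
{x : v(0,x) ≥ 0} ⊇ X₀. -/
theorem roa_subset_nonneg_level_set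
    {n m : ℕ} (T : ℝ) (hT : 0 < T)
    (X : Set (Fin n → ℝ)) (U : Set (Fin m → ℝ)) (XT : Set (Fin n → ℝ))
    (hXT : XT ⊆ X)
    (f : ℝ → (Fin n → ℝ) → (Fin m → ℝ) → (Fin n → ℝ))
    (v : ℝ × (Fin n → ℝ) → ℝ) (hv : ContDiff ℝ 1 v)
    (hLv : ∀ t ∈ Set.Icc (0 : ℝ) T, ∀ x ∈ X, ∀ u ∈ U,
      fderiv ℝ v (t, x) (1, f t x u) ≤ 0)
    (hvT : ∀ x ∈ XT, 0 ≤ v (T, x)) :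
    regionOfAttraction T X U XT f ⊆ {x | 0 ≤ v (0, x)} := by
  rintro x₀ ⟨hx₀X, u, x, hx0, hderiv, hXmem, hUmem, hxT⟩
  set g : ℝ → ℝ := fun t => v (t, x t) with hg
  have hgderiv : ∀ t ∈ Set.Icc (0 : ℝ) T,
      HasDerivAt g (fderiv ℝ v (t, x t) (1, f t (x t) (u t))) t := by
    intro t ht
    have hcurve : HasDerivAt (fun s => ((s : ℝ), x s)) (1, f t (x t) (u t)) t :=
      (hasDerivAt_id t).prodMk (hderiv t ht)
    exact ((hv.differentiable one_ne_zero (t, x t)).hasFDerivAt).comp_hasDerivAt t hcurve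
  have hanti : AntitoneOn g (Set.Icc 0 T) := by
    apply antitoneOn_of_deriv_nonpos (convex_Icc 0 T)
    · intro t ht
      exact ((hgderiv t ht).continuousAt).continuousWithinAt
    · intro t ht
      rw [interior_Icc] at ht
      exact ((hgderiv t (Set.mem_Icc_of_Ioo ht)).differentiableAt).differentiableWithinAt
    · intro t ht
      rw [interior_Icc] at ht
      have ht' := Set.mem_Icc_of_Ioo ht
      rw [(hgderiv t ht').deriv]
      exact hLv t ht' (x t) (hXmem t ht') (u t) (hUmem t ht')
  have h0 : (0:ℝ) ∈ Set.Icc (0:ℝ) T := ⟨le_rfl, hT.le⟩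
  have hTm : T ∈ Set.Icc (0:ℝ) T := ⟨hT.le, le_rfl⟩
  have := hanti h0 hTm hT.le
  have hvTn : 0 ≤ g T := hvT _ hxT
  simp only [Set.mem_setOf_eq]
  calc (0:ℝ) ≤ g T := hvTn
    _ ≤ g 0 := this
    _ = v (0, x₀) := by rw [hg]; simp [hx0]
end

section
/- Let 0 = T₁ < T₂ < T₃ = T, X ⊆ ℝⁿ, U ⊆ ℝᵐ, and f : ℝ × ℝⁿ × ℝᵐ → ℝⁿ. Let v₁, v₂ : ℝ × ℝⁿ → ℝ be continuously differentiable with (Lv₁)(t,x,u) ≤ 0 for all (t,x,u) ∈ [T₁,T₂] × X × U, (Lv₂)(t,x,u) ≤ 0 for all (t,x,u) ∈ [T₂,T₃] × X × U, and v₁(T₂, x) ≥ v₂(T₂, x) for all x ∈ X. Let u : [0,T] → ℝᵐ and x : [0,T] → ℝⁿ be differentiable with x'(t) = f(t,x(t),u(t)), x(t) ∈ X, u(t) ∈ U for all t. Then for every t_α ∈ [T₁,T₂] and t_β ∈ [T₂,T₃], v₂(t_β, x(t_β)) ≤ v₁(t_α, x(t_α)). -/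
/-- time-splitting step: with a time grid 0 = T₁ < T₂ < T₃ = T,
two C¹ functions v₁, v₂ whose Lie derivatives Dvₖ(t,x)(1, f(t,x,u)) are
nonpositive on [T₁,T₂] × X × U and [T₂,T₃] × X × U respectively, and the
matching inequality v₁(T₂,·) ≥ v₂(T₂,·) on X, the glued piecewise function
is nonincreasing along admissible trajectories: for tα ∈ [T₁,T₂] and
tβ ∈ [T₂,T₃], v₂(tβ, x(tβ)) ≤ v₁(tα, x(tα)). -/
theorem time_split_nonincreasing
    {n m : ℕ} (T₁ T₂ T₃ T : ℝ)
    (hT₁ : T₁ = 0) (h12 : T₁ < T₂) (h23 : T₂ < T₃) (hT₃ : T₃ = T)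
    (X : Set (Fin n → ℝ)) (U : Set (Fin m → ℝ))
    (f : ℝ → (Fin n → ℝ) → (Fin m → ℝ) → (Fin n → ℝ))
    (v₁ v₂ : ℝ × (Fin n → ℝ) → ℝ)
    (hv₁ : ContDiff ℝ 1 v₁) (hv₂ : ContDiff ℝ 1 v₂)
    (hLv₁ : ∀ t ∈ Set.Icc T₁ T₂, ∀ x ∈ X, ∀ u ∈ U,
      fderiv ℝ v₁ (t, x) (1, f t x u) ≤ 0)
    (hLv₂ : ∀ t ∈ Set.Icc T₂ T₃, ∀ x ∈ X, ∀ u ∈ U,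
      fderiv ℝ v₂ (t, x) (1, f t x u) ≤ 0)
    (hmatch : ∀ x ∈ X, v₂ (T₂, x) ≤ v₁ (T₂, x))
    (u : ℝ → (Fin m → ℝ)) (x : ℝ → (Fin n → ℝ))
    (hode : ∀ t ∈ Set.Icc T₁ T₃, HasDerivAt x (f t (x t) (u t)) t)
    (hxX : ∀ t ∈ Set.Icc T₁ T₃, x t ∈ X)
    (huU : ∀ t ∈ Set.Icc T₁ T₃, u t ∈ U)
    (tα tβ : ℝ) (hα : tα ∈ Set.Icc T₁ T₂) (hβ : tβ ∈ Set.Icc T₂ T₃) :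
    v₂ (tβ, x tβ) ≤ v₁ (tα, x tα) := by

  have hsub1 : Set.Icc T₁ T₂ ⊆ Set.Icc T₁ T₃ := Set.Icc_subset_Icc le_rfl h23.le
  have hsub2 : Set.Icc T₂ T₃ ⊆ Set.Icc T₁ T₃ := Set.Icc_subset_Icc h12.le le_rfl
  have key : ∀ (v : ℝ × (Fin n → ℝ) → ℝ) (a b : ℝ), ContDiff ℝ 1 v →
      (∀ t ∈ Set.Icc a b, ∀ x ∈ X, ∀ u ∈ U, fderiv ℝ v (t, x) (1, f t x u) ≤ 0) →
      Set.Icc a b ⊆ Set.Icc T₁ T₃ →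
      AntitoneOn (fun t => v (t, x t)) (Set.Icc a b) := by
    intro v a b hv hLv hsub
    have hd : ∀ t ∈ Set.Icc a b,
        HasDerivAt (fun t => v (t, x t))
          (fderiv ℝ v (t, x t) (1, f t (x t) (u t))) t := by
      intro t ht
      have h1 : HasDerivAt (fun t => (t, x t)) ((1 : ℝ), f t (x t) (u t)) t :=
        (hasDerivAt_id t).prodMk (hode t (hsub ht))
      exact ((hv.differentiable one_ne_zero (t, x t)).hasFDerivAt).comp_hasDerivAt t h1
    have hcont : ContinuousOn (fun t => v (t, x t)) (Set.Icc a b) :=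
      fun t ht => ((hd t ht).continuousAt).continuousWithinAt
    refine antitoneOn_of_deriv_nonpos (convex_Icc a b) hcont ?_ ?_
    · intro t ht
      rw [interior_Icc] at ht
      exact ((hd t (Set.Ioo_subset_Icc_self ht)).differentiableAt).differentiableWithinAt
    · intro t ht
      rw [interior_Icc] at ht
      have ht' := Set.Ioo_subset_Icc_self ht
      rw [(hd t ht').deriv]
      exact hLv t ht' (x t) (hxX t (hsub ht')) (u t) (huU t (hsub ht'))
  have hT₂ : T₂ ∈ Set.Icc T₁ T₃ := ⟨h12.le, h23.le⟩
  calc v₂ (tβ, x tβ) ≤ v₂ (T₂, x T₂) :=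
        key v₂ T₂ T₃ hv₂ hLv₂ hsub2 ⟨le_rfl, h23.le⟩ hβ hβ.1
    _ ≤ v₁ (T₂, x T₂) := hmatch (x T₂) (hxX T₂ hT₂)
    _ ≤ v₁ (tα, x tα) := key v₁ T₁ T₂ hv₁ hLv₁ hsub1 hα ⟨h12.le, le_rfl⟩ hα.2
end

section
/- Let 0 = T₁ < T₂ < ⋯ < T_K = T be a time grid, X ⊆ ℝⁿ, U ⊆ ℝᵐ, X_T ⊆ X, and f : ℝ × ℝⁿ × ℝᵐ → ℝⁿ. Let v₁, …, v_{K−1} : ℝ × ℝⁿ → ℝ be continuously differentiable functions satisfying: (i) (Lv_k)(t,x,u) ≤ 0 for all (t,x,u) ∈ [T_k, T_{k+1}] × X × U and each k ∈ {1,…,K−1}; (ii) v_k(T_{k+1}, x) ≥ v_{k+1}(T_{k+1}, x) for all x ∈ X and each k ∈ {1,…,K−2}; (iii) v_{K−1}(T, x) ≥ 0 for all x ∈ X_T. Then v₁(0, x₀) ≥ 0 for every x₀ ∈ X₀. -/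
/-- pure time splitting, I = 1: given a time grid
0 = T₁ < T₂ < ⋯ < T_K = T (encoded by Tt : ℕ → ℝ on indices 1,…,K) and C¹
functions v₁,…,v_{K-1} such that
(i) the Lie derivative of v_k is nonpositive on [T_k,T_{k+1}] × X × U,
(ii) v_k(T_{k+1},·) ≥ v_{k+1}(T_{k+1},·) on X for k ≤ K−2,
(iii) v_{K−1}(T,·) ≥ 0 on X_T,
then v₁(0,·) ≥ 0 on the region of attraction X₀. -/
theorem time_split_roa_nonneg
    {n m : ℕ} (T : ℝ) (hT : 0 < T) (K : ℕ) (hK : 2 ≤ K)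
    (Tt : ℕ → ℝ) (hT1 : Tt 1 = 0) (hTK : Tt K = T)
    (hTmono : ∀ k, 1 ≤ k → k < K → Tt k < Tt (k + 1))
    (X : Set (Fin n → ℝ)) (U : Set (Fin m → ℝ)) (XT : Set (Fin n → ℝ))
    (hXT : XT ⊆ X)
    (f : ℝ → (Fin n → ℝ) → (Fin m → ℝ) → (Fin n → ℝ))
    (v : ℕ → ℝ × (Fin n → ℝ) → ℝ)
    (hv : ∀ k, 1 ≤ k → k ≤ K - 1 → ContDiff ℝ 1 (v k))
    (hLv : ∀ k, 1 ≤ k → k ≤ K - 1 → ∀ t ∈ Set.Icc (Tt k) (Tt (k + 1)),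
      ∀ x ∈ X, ∀ u ∈ U, fderiv ℝ (v k) (t, x) (1, f t x u) ≤ 0)
    (hmatch : ∀ k, 1 ≤ k → k ≤ K - 2 → ∀ x ∈ X,
      v (k + 1) (Tt (k + 1), x) ≤ v k (Tt (k + 1), x))
    (hterm : ∀ x ∈ XT, 0 ≤ v (K - 1) (T, x)) :
    ∀ x₀ ∈ regionOfAttraction T X U XT f, 0 ≤ v 1 (0, x₀) := by
  rintro x₀ ⟨hx₀X, u, x, hx0, hderiv, hxX, huU, hxT⟩
  have hgrid : ∀ i j, 1 ≤ i → i ≤ j → j ≤ K → Tt i ≤ Tt j := by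
    intro i j h1 hij hjK
    induction j with
    | zero => omega
    | succ j ih =>
      rcases Nat.lt_or_ge i (j + 1) with h | h
      · have h2 := ih (by omega) (by omega)
        have h3 : Tt j < Tt (j + 1) := hTmono j (by omega) (by omega)
        linarith
      · have : i = j + 1 := by omega
        simp [this]
  have hTk0 : ∀ k, 1 ≤ k → k ≤ K → 0 ≤ Tt k := by
    intro k h1 hK'
    have := hgrid 1 k le_rfl h1 hK'
    rwa [hT1] at this
  have hTkT : ∀ k, 1 ≤ k → k ≤ K → Tt k ≤ T := by
    intro k h1 hk
    have := hgrid k K h1 hk le_rfl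
    rwa [hTK] at this
  have hanti : ∀ k, 1 ≤ k → k ≤ K - 1 →
      v k (Tt (k + 1), x (Tt (k + 1))) ≤ v k (Tt k, x (Tt k)) := by
    intro k h1 hk
    have hIcc : Set.Icc (Tt k) (Tt (k + 1)) ⊆ Set.Icc 0 T := by
      intro t ht
      exact ⟨le_trans (hTk0 k h1 (by omega)) ht.1,
        le_trans ht.2 (hTkT (k + 1) (by omega) (by omega))⟩
    have hg : ∀ t ∈ Set.Icc (Tt k) (Tt (k + 1)),
        HasDerivAt (fun s => v k (s, x s))
          (fderiv ℝ (v k) (t, x t) (1, f t (x t) (u t))) t := by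
      intro t ht
      have hxd := hderiv t (hIcc ht)
      have hφ : HasDerivAt (fun s => ((s, x s) : ℝ × (Fin n → ℝ)))
          (1, f t (x t) (u t)) t := (hasDerivAt_id t).prodMk hxd
      have hvd : HasFDerivAt (v k) (fderiv ℝ (v k) (t, x t)) (t, x t) :=
        (((hv k h1 hk).differentiable one_ne_zero) (t, x t)).hasFDerivAt
      exact hvd.comp_hasDerivAt t hφ
    have hmono : AntitoneOn (fun s => v k (s, x s)) (Set.Icc (Tt k) (Tt (k + 1))) := by
      apply antitoneOn_of_deriv_nonpos (convex_Icc _ _)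
      · exact fun t ht => (hg t ht).continuousAt.continuousWithinAt
      · intro t ht
        rw [interior_Icc] at ht
        exact (hg t (Set.Ioo_subset_Icc_self ht)).differentiableAt.differentiableWithinAt
      · intro t ht
        rw [interior_Icc] at ht
        have ht' := Set.Ioo_subset_Icc_self ht
        rw [(hg t ht').deriv]
        exact hLv k h1 hk t ht' (x t) (hxX t (hIcc ht')) (u t) (huU t (hIcc ht'))
    have hle : Tt k ≤ Tt (k + 1) := le_of_lt (hTmono k h1 (by omega))
    exact hmono (Set.left_mem_Icc.mpr hle) (Set.right_mem_Icc.mpr hle) hle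
  have key : ∀ d k, 1 ≤ k → k ≤ K - 1 → K - 1 - k = d → 0 ≤ v k (Tt k, x (Tt k)) := by
    intro d
    induction d with
    | zero =>
      intro k h1 hk hd
      have hkK : k = K - 1 := by omega
      subst hkK
      have hK1 : K - 1 + 1 = K := by omega
      have h0 : 0 ≤ v (K - 1) (Tt K, x (Tt K)) := by
        rw [hTK]; exact hterm (x T) hxT
      have h2 := hanti (K - 1) h1 le_rfl
      rw [hK1] at h2
      linarith
    | succ d ih =>
      intro k h1 hk hd
      have h2 : 0 ≤ v (k + 1) (Tt (k + 1), x (Tt (k + 1))) :=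
        ih (k + 1) (by omega) (by omega) (by omega)
      have hxmem : x (Tt (k + 1)) ∈ X :=
        hxX _ ⟨hTk0 (k + 1) (by omega) (by omega), hTkT (k + 1) (by omega) (by omega)⟩
      have hm := hmatch k h1 (by omega) (x (Tt (k + 1))) hxmem
      have h3 := hanti k h1 hk
      linarith
  have := key (K - 2) 1 le_rfl (by omega) (by omega)
  rwa [hT1, hx0] at this
end

section
/- Let T > 0, X ⊆ ℝⁿ, U ⊆ ℝᵐ, X_T ⊆ X, f : ℝ × ℝⁿ × ℝᵐ → ℝⁿ, h ∈ ℝⁿ with h ≠ 0, and c ∈ ℝ. Set X_α = X ∩ {x : h·x ≤ c} and X_β = X ∩ {x : h·x ≥ c}. Let v_α, v_β : ℝ × ℝⁿ → ℝ be continuously differentiable and satisfy: (i) (Lv_α)(t,x,u) ≤ 0 on [0,T] × X_α × U and (Lv_β)(t,x,u) ≤ 0 on [0,T] × X_β × U; (ii) the interface constraint (v_α(t,x) − v_β(t,x)) · (h·f(t,x,u)) ≥ 0 for all t ∈ [0,T], all x ∈ X with h·x = c, and all u ∈ U; (iii) v_β(T, x) ≥ 0 for all x ∈ X_T ∩ X_β.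 Let x₀ ∈ X_α, and let u : [0,T] → ℝᵐ, x : [0,T] → ℝⁿ be such that x is differentiable, x(0) = x₀, x'(t) = f(t,x(t),u(t)), x(t) ∈ X, u(t) ∈ U for all t ∈ [0,T], and x(T) ∈ X_T. Suppose there is τ ∈ [0,T] with x(t) ∈ X_α for t ∈ [0,τ], x(t) ∈ X_β for t ∈ [τ,T], and the crossing is transversal: h·f(τ, x(τ), u(τ)) > 0. Then v_α(0, x₀) ≥ 0. -/
open Matrix

/-- state-space splitting case of Theorem 1, single crossing:
the state space X is split by the hyperplane {x : h·x = c} into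
Xα = X ∩ {h·x ≤ c} and Xβ = X ∩ {h·x ≥ c}. If vα, vβ are C¹ with
nonpositive Lie derivatives on [0,T] × Xα × U and [0,T] × Xβ × U,
satisfy the interface constraint (vα − vβ)·(h·f) ≥ 0 on the shared boundary,
and vβ(T,·) ≥ 0 on X_T ∩ Xβ, then along any admissible trajectory starting
at x₀ ∈ Xα, staying in Xα up to a crossing time τ and in Xβ afterwards,
reaching X_T at time T, with transversal crossing h·f(τ,x(τ),u(τ)) > 0,
we have vα(0, x₀) ≥ 0. -/
theorem state_split_single_crossing_nonneg
    {n m : ℕ} (T : ℝ) (hT : 0 < T)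
    (X : Set (Fin n → ℝ)) (U : Set (Fin m → ℝ)) (XT : Set (Fin n → ℝ))
    (hXT : XT ⊆ X)
    (f : ℝ → (Fin n → ℝ) → (Fin m → ℝ) → (Fin n → ℝ))
    (h : Fin n → ℝ) (hh : h ≠ 0) (c : ℝ)
    (Xα Xβ : Set (Fin n → ℝ))
    (hXα : Xα = X ∩ {x | h ⬝ᵥ x ≤ c})
    (hXβ : Xβ = X ∩ {x | c ≤ h ⬝ᵥ x})
    (vα vβ : ℝ × (Fin n → ℝ) → ℝ)
    (hvα : ContDiff ℝ 1 vα) (hvβ : ContDiff ℝ 1 vβ)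
    (hLvα : ∀ t ∈ Set.Icc (0 : ℝ) T, ∀ x ∈ Xα, ∀ u ∈ U,
      fderiv ℝ vα (t, x) (1, f t x u) ≤ 0)
    (hLvβ : ∀ t ∈ Set.Icc (0 : ℝ) T, ∀ x ∈ Xβ, ∀ u ∈ U,
      fderiv ℝ vβ (t, x) (1, f t x u) ≤ 0)
    (hiface : ∀ t ∈ Set.Icc (0 : ℝ) T, ∀ x ∈ X, h ⬝ᵥ x = c → ∀ u ∈ U,
      0 ≤ (vα (t, x) - vβ (t, x)) * (h ⬝ᵥ f t x u))
    (hterm : ∀ x ∈ XT ∩ Xβ, 0 ≤ vβ (T, x))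
    (x₀ : Fin n → ℝ) (hx₀ : x₀ ∈ Xα)
    (u : ℝ → (Fin m → ℝ)) (x : ℝ → (Fin n → ℝ))
    (hx0 : x 0 = x₀)
    (hode : ∀ t ∈ Set.Icc (0 : ℝ) T, HasDerivAt x (f t (x t) (u t)) t)
    (hxX : ∀ t ∈ Set.Icc (0 : ℝ) T, x t ∈ X)
    (huU : ∀ t ∈ Set.Icc (0 : ℝ) T, u t ∈ U)
    (hxT : x T ∈ XT)
    (τ : ℝ) (hτ : τ ∈ Set.Icc (0 : ℝ) T)
    (hinα : ∀ t ∈ Set.Icc (0 : ℝ) τ, x t ∈ Xα)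
    (hinβ : ∀ t ∈ Set.Icc τ T, x t ∈ Xβ)
    (htrans : 0 < h ⬝ᵥ f τ (x τ) (u τ)) :
    0 ≤ vα (0, x₀) := by
  obtain ⟨hτ0, hτT⟩ := hτ
  -- derivative lemma
  have hder : ∀ (v : ℝ × (Fin n → ℝ) → ℝ), ContDiff ℝ 1 v → ∀ t ∈ Set.Icc (0:ℝ) T,
      HasDerivAt (fun s => v (s, x s)) (fderiv ℝ v (t, x t) (1, f t (x t) (u t))) t := by
    intro v hv t ht
    have h1 : HasDerivAt (fun s => (s, x s)) ((1 : ℝ), f t (x t) (u t)) t :=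
      HasDerivAt.prodMk (hasDerivAt_id t) (hode t ht)
    exact ((hv.differentiable one_ne_zero (t, x t)).hasFDerivAt).comp_hasDerivAt t h1
  have hcontx : ∀ t ∈ Set.Icc (0:ℝ) T, ContinuousAt (fun s => (s, x s)) t := by
    intro t ht
    exact continuousAt_id.prodMk (hode t ht).continuousAt
  have hsub : Set.Icc (0:ℝ) τ ⊆ Set.Icc (0:ℝ) T := Set.Icc_subset_Icc le_rfl hτT
  have hsub' : Set.Icc τ T ⊆ Set.Icc (0:ℝ) T := Set.Icc_subset_Icc hτ0 le_rfl
  -- Antitone of vα on [0,τ]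
  have hmα : AntitoneOn (fun s => vα (s, x s)) (Set.Icc 0 τ) := by
    apply antitoneOn_of_deriv_nonpos (convex_Icc _ _)
    · intro t ht
      exact ((hvα.continuous.continuousAt).comp (hcontx t (hsub ht))).continuousWithinAt
    · intro t ht
      rw [interior_Icc] at ht
      exact (hder vα hvα t (hsub (Set.Ioo_subset_Icc_self ht))).differentiableAt.differentiableWithinAt
    · intro t ht
      rw [interior_Icc] at ht
      have ht' := hsub (Set.Ioo_subset_Icc_self ht)
      rw [(hder vα hvα t ht').deriv]
      exact hLvα t ht' (x t) (hinα t (Set.Ioo_subset_Icc_self ht)) (u t) (huU t ht')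
  have hmβ : AntitoneOn (fun s => vβ (s, x s)) (Set.Icc τ T) := by
    apply antitoneOn_of_deriv_nonpos (convex_Icc _ _)
    · intro t ht
      exact ((hvβ.continuous.continuousAt).comp (hcontx t (hsub' ht))).continuousWithinAt
    · intro t ht
      rw [interior_Icc] at ht
      exact (hder vβ hvβ t (hsub' (Set.Ioo_subset_Icc_self ht))).differentiableAt.differentiableWithinAt
    · intro t ht
      rw [interior_Icc] at ht
      have ht' := hsub' (Set.Ioo_subset_Icc_self ht)
      rw [(hder vβ hvβ t ht').deriv]
      exact hLvβ t ht' (x t) (hinβ t (Set.Ioo_subset_Icc_self ht)) (u t) (huU t ht')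
  have h1 : vα (τ, x τ) ≤ vα (0, x₀) := by
    rw [← hx0]
    exact hmα (Set.left_mem_Icc.2 hτ0) (Set.right_mem_Icc.2 hτ0) hτ0
  have hxτα := hinα τ (Set.right_mem_Icc.2 hτ0)
  have hxτβ := hinβ τ (Set.left_mem_Icc.2 hτT)
  have heq : h ⬝ᵥ x τ = c := by
    rw [hXα] at hxτα; rw [hXβ] at hxτβ
    exact le_antisymm hxτα.2 hxτβ.2
  have hxτX : x τ ∈ X := hxX τ ⟨hτ0, hτT⟩
  have h2 : vβ (τ, x τ) ≤ vα (τ, x τ) := by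
    have := hiface τ ⟨hτ0, hτT⟩ (x τ) hxτX heq (u τ) (huU τ ⟨hτ0, hτT⟩)
    nlinarith
  have h3 : vβ (T, x T) ≤ vβ (τ, x τ) :=
    hmβ (Set.left_mem_Icc.2 hτT) (Set.right_mem_Icc.2 hτT) hτT
  have h4 : 0 ≤ vβ (T, x T) := hterm (x T) ⟨hxT, hinβ T (Set.right_mem_Icc.2 hτT)⟩
  linarith
end

section
/- Let T > 0, X ⊆ ℝⁿ, U ⊆ ℝᵐ, X_T ⊆ X, and f : ℝ × ℝⁿ × ℝᵐ → ℝⁿ. Suppose the pair (v, w), with v : ℝ × ℝⁿ → ℝ continuously differentiable and w : ℝⁿ → ℝ, satisfies: (Lv)(t,x,u) ≤ 0 for all (t,x,u) ∈ [0,T] × X × U; w(x) ≥ v(0,x) + 1 for all x ∈ X; v(T,x) ≥ 0 for all x ∈ X_T; and w(x) ≥ 0 for all x ∈ X. Then w(x) ≥ I_{X₀}(x) for every x ∈ X, where I_{X₀} is the indicator function of the region of attraction X₀ (equal to 1 on X₀ and 0 elsewhere). -/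
/-- any pair (v, w) feasible for the dual LP (4), i.e. v is C¹
with nonpositive Lie derivative on [0,T] × X × U, w ≥ v(0,·) + 1 on X,
v(T,·) ≥ 0 on X_T, and w ≥ 0 on X, satisfies w ≥ I_{X₀} on X, where I_{X₀}
is the indicator function of the region of attraction. -/
theorem feasible_w_dominates_indicator
    {n m : ℕ} (T : ℝ) (hT : 0 < T)
    (X : Set (Fin n → ℝ)) (U : Set (Fin m → ℝ)) (XT : Set (Fin n → ℝ))
    (hXT : XT ⊆ X)
    (f : ℝ → (Fin n → ℝ) → (Fin m → ℝ) → (Fin n → ℝ))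
    (v : ℝ × (Fin n → ℝ) → ℝ) (w : (Fin n → ℝ) → ℝ)
    (hv : ContDiff ℝ 1 v)
    (hLv : ∀ t ∈ Set.Icc (0 : ℝ) T, ∀ x ∈ X, ∀ u ∈ U,
      fderiv ℝ v (t, x) (1, f t x u) ≤ 0)
    (hw1 : ∀ x ∈ X, v (0, x) + 1 ≤ w x)
    (hvT : ∀ x ∈ XT, 0 ≤ v (T, x))
    (hw0 : ∀ x ∈ X, 0 ≤ w x) :
    ∀ x ∈ X, Set.indicator (regionOfAttraction T X U XT f)
      (fun _ => (1 : ℝ)) x ≤ w x := by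
  intro x₀ hx₀
  by_cases hmem : x₀ ∈ regionOfAttraction T X U XT f
  · rw [Set.indicator_of_mem hmem]
    obtain ⟨-, u, x, hx0, hderiv, hX, hU, hXTend⟩ := hmem
    set g : ℝ → ℝ := fun t => v (t, x t) with hg
    have hgderiv : ∀ t ∈ Set.Icc (0 : ℝ) T,
        HasDerivAt g (fderiv ℝ v (t, x t) (1, f t (x t) (u t))) t := by
      intro t ht
      have h1 : HasDerivAt (fun s => (s, x s)) ((1 : ℝ), f t (x t) (u t)) t :=
        (hasDerivAt_id t).prodMk (hderiv t ht)
      have h2 := (hv.differentiable one_ne_zero (t, x t)).hasFDerivAt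
      exact h2.comp_hasDerivAt t h1
    have hcont : ContinuousOn g (Set.Icc 0 T) := fun t ht =>
      (hgderiv t ht).continuousAt.continuousWithinAt
    have hanti : AntitoneOn g (Set.Icc 0 T) := by
      apply antitoneOn_of_deriv_nonpos (convex_Icc 0 T) hcont
      · intro t ht
        rw [interior_Icc] at ht
        exact ((hgderiv t (Set.Ioo_subset_Icc_self ht)).differentiableAt).differentiableWithinAt
      · intro t ht
        rw [interior_Icc] at ht
        have ht' := Set.Ioo_subset_Icc_self ht
        rw [(hgderiv t ht').deriv]
        exact hLv t ht' (x t) (hX t ht') (u t) (hU t ht')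
    have h0T : g T ≤ g 0 := hanti (Set.left_mem_Icc.2 hT.le) (Set.right_mem_Icc.2 hT.le) hT.le
    have hgT : 0 ≤ g T := hvT _ hXTend
    have : 0 ≤ v (0, x₀) := by rw [← hx0]; exact hgT.trans h0T
    linarith [hw1 x₀ hx₀]
  · rw [Set.indicator_of_notMem hmem]
    exact hw0 x₀ hx₀
end

section
/- Let T > 0, X ⊆ ℝⁿ be Lebesgue measurable, U ⊆ ℝᵐ, X_T ⊆ X, and f : ℝ × ℝⁿ × ℝᵐ → ℝⁿ, and assume the region of attraction X₀ is Lebesgue measurable. Then for every pair (v, w) with v : ℝ × ℝⁿ → ℝ continuously differentiable, w : ℝⁿ → ℝ Lebesgue integrable on X, satisfying (Lv)(t,x,u) ≤ 0 on [0,T] × X × U, w ≥ v(0,·) + 1 on X, v(T,·) ≥ 0 on X_T, and w ≥ 0 on X, it holds that ∫_X w dλ ≥ λ(X₀), where λ is the Lebesgue measure. In particular, the optimal value d* of the dual linear program is at least λ(X₀). -/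
open MeasureTheory

/-- for every pair (v, w) feasible for the dual LP (4)
(v C¹ with nonpositive Lie derivative on [0,T] × X × U, w ≥ v(0,·) + 1 on X,
v(T,·) ≥ 0 on X_T, w ≥ 0 on X, w Lebesgue integrable on X), the objective
∫_X w dλ is at least the Lebesgue measure of the region of attraction X₀;
in particular the optimal value d* of the dual LP is at least λ(X₀). -/
theorem dual_objective_outer_bounds_roa_volume
    {n m : ℕ} (T : ℝ) (hT : 0 < T)
    (X : Set (Fin n → ℝ)) (hXmeas : MeasurableSet X)
    (U : Set (Fin m → ℝ)) (XT : Set (Fin n → ℝ)) (hXT : XT ⊆ X)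
    (f : ℝ → (Fin n → ℝ) → (Fin m → ℝ) → (Fin n → ℝ))
    (hX0meas : MeasurableSet (regionOfAttraction T X U XT f))
    (v : ℝ × (Fin n → ℝ) → ℝ) (w : (Fin n → ℝ) → ℝ)
    (hv : ContDiff ℝ 1 v)
    (hwint : IntegrableOn w X volume)
    (hLv : ∀ t ∈ Set.Icc (0 : ℝ) T, ∀ x ∈ X, ∀ u ∈ U,
      fderiv ℝ v (t, x) (1, f t x u) ≤ 0)
    (hw1 : ∀ x ∈ X, v (0, x) + 1 ≤ w x)
    (hvT : ∀ x ∈ XT, 0 ≤ v (T, x))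
    (hw0 : ∀ x ∈ X, 0 ≤ w x) :
    volume (regionOfAttraction T X U XT f) ≤
      ENNReal.ofReal (∫ x in X, w x) := by
  set X₀ := regionOfAttraction T X U XT f with hX₀
  have hsub : X₀ ⊆ X := fun x hx => hx.1
  -- Key: w ≥ 1 on X₀
  have hkey : ∀ x₀ ∈ X₀, (1 : ℝ) ≤ w x₀ := by
    rintro x₀ ⟨hx₀X, u, x, hx0, hderiv, hxX, huU, hxT⟩
    -- derivative of t ↦ v (t, x t)
    have hg : ∀ t ∈ Set.Icc (0 : ℝ) T,
        HasDerivAt (fun s => v (s, x s)) (fderiv ℝ v (t, x t) (1, f t (x t) (u t))) t := by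
      intro t ht
      have h1 : HasDerivAt (fun s : ℝ => (s, x s)) ((1 : ℝ), f t (x t) (u t)) t :=
        (hasDerivAt_id t).prodMk (hderiv t ht)
      exact ((hv.differentiable one_ne_zero (t, x t)).hasFDerivAt).comp_hasDerivAt t h1
    have hanti : AntitoneOn (fun s => v (s, x s)) (Set.Icc 0 T) := by
      apply antitoneOn_of_deriv_nonpos (convex_Icc 0 T)
      · intro t ht
        exact ((hg t ht).continuousAt).continuousWithinAt
      · intro t ht
        rw [interior_Icc] at ht
        exact ((hg t (Set.mem_Icc_of_Ioo ht)).differentiableAt).differentiableWithinAt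
      · intro t ht
        rw [interior_Icc] at ht
        have ht' := Set.mem_Icc_of_Ioo ht
        rw [(hg t ht').deriv]
        exact hLv t ht' (x t) (hxX t ht') (u t) (huU t ht')
    have h0T : v (T, x T) ≤ v (0, x 0) :=
      hanti (Set.left_mem_Icc.2 hT.le) (Set.right_mem_Icc.2 hT.le) hT.le
    have hv0 : 0 ≤ v (0, x₀) := by
      rw [← hx0]; exact le_trans (hvT _ hxT) h0T
    have := hw1 x₀ hx₀X
    linarith
  -- measure-theoretic part
  have hmono : volume X₀ ≤ ∫⁻ y in X₀, ENNReal.ofReal (w y) := by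
    have h1 : volume X₀ = ∫⁻ _ in X₀, (1 : ENNReal) := by simp
    rw [h1]
    refine setLIntegral_mono' hX0meas fun y hy => ?_
    exact ENNReal.one_le_ofReal.mpr (hkey y hy)
  have hwint₀ : IntegrableOn w X₀ volume := hwint.mono_set hsub
  have heq : ∫⁻ y in X₀, ENNReal.ofReal (w y) = ENNReal.ofReal (∫ y in X₀, w y) := by
    rw [← ofReal_integral_eq_lintegral_ofReal hwint₀]
    exact (ae_restrict_iff' hX0meas).2 (Filter.Eventually.of_forall
      fun y hy => le_trans zero_le_one (hkey y hy))
  have hint : ∫ y in X₀, w y ≤ ∫ y in X, w y := by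
    apply setIntegral_mono_set hwint
    · exact (ae_restrict_iff' hXmeas).2 (Filter.Eventually.of_forall hw0)
    · exact Filter.Eventually.of_forall hsub
  calc volume X₀ ≤ ∫⁻ y in X₀, ENNReal.ofReal (w y) := hmono
    _ = ENNReal.ofReal (∫ y in X₀, w y) := heq
    _ ≤ ENNReal.ofReal (∫ y in X, w y) := ENNReal.ofReal_le_ofReal hint
end

section
/- Define φ : (0, π) → ℝ by φ(θ) = (θ − sin θ · cos θ) / sin² θ. Then φ is strictly increasing on (0, π), φ(θ) → 0 as θ → 0⁺, and φ(θ) → +∞ as θ → π⁻. Consequently, for every r > 0 and every z > 0, there exists a unique θ ∈ (0, π) with φ(θ) · r² = 2z. -/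
open Real Filter

private lemma sin_sub_mul_cos_pos {θ : ℝ} (h : θ ∈ Set.Ioo 0 π) :
    0 < Real.sin θ - θ * Real.cos θ := by
  have hmono : StrictMonoOn (fun x : ℝ => Real.sin x - x * Real.cos x) (Set.Icc 0 π) := by
    apply strictMonoOn_of_deriv_pos (convex_Icc 0 π)
    · fun_prop
    · intro x hx
      rw [interior_Icc] at hx
      have hd : HasDerivAt (fun x : ℝ => Real.sin x - x * Real.cos x) (x * Real.sin x) x := by
        have := (Real.hasDerivAt_sin x).sub ((hasDerivAt_id x).mul (Real.hasDerivAt_cos x))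
        exact this.congr_deriv (by simp only [id]; ring)
      rw [hd.deriv]
      exact mul_pos hx.1 (Real.sin_pos_of_pos_of_lt_pi hx.1 hx.2)
  have := hmono (Set.left_mem_Icc.mpr Real.pi_pos.le)
    ⟨h.1.le, h.2.le⟩ h.1
  simpa using this

private lemma phi_hasDerivAt {θ : ℝ} (h : θ ∈ Set.Ioo 0 π) :
    HasDerivAt (fun θ : ℝ => (θ - sin θ * cos θ) / (sin θ) ^ 2)
      (2 * Real.sin θ * (Real.sin θ - θ * Real.cos θ) / (Real.sin θ) ^ 4) θ := by
  have hs : Real.sin θ ≠ 0 := (Real.sin_pos_of_pos_of_lt_pi h.1 h.2).ne'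
  have hN : HasDerivAt (fun θ : ℝ => θ - Real.sin θ * Real.cos θ)
      (1 - (Real.cos θ * Real.cos θ + Real.sin θ * (-Real.sin θ))) θ :=
    (hasDerivAt_id θ).sub ((Real.hasDerivAt_sin θ).mul (Real.hasDerivAt_cos θ))
  have hD : HasDerivAt (fun θ : ℝ => (Real.sin θ) ^ 2)
      (2 * Real.sin θ ^ 1 * Real.cos θ) θ := by
    have := (Real.hasDerivAt_sin θ).fun_pow 2
    simpa using this
  have hDne : (Real.sin θ) ^ 2 ≠ 0 := pow_ne_zero 2 hs
  have := hN.div hD hDne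
  refine this.congr_deriv ?_
  symm
  have hsc : Real.sin θ ^ 2 + Real.cos θ ^ 2 = 1 := Real.sin_sq_add_cos_sq θ
  rw [show ((Real.sin θ ^ 2) ^ 2 : ℝ) = Real.sin θ ^ 4 by ring]
  congr 1
  linear_combination (-Real.sin θ ^ 2) * hsc

private lemma phi_deriv_pos {θ : ℝ} (h : θ ∈ Set.Ioo 0 π) :
    0 < 2 * Real.sin θ * (Real.sin θ - θ * Real.cos θ) / (Real.sin θ) ^ 4 := by
  have hs : 0 < Real.sin θ := Real.sin_pos_of_pos_of_lt_pi h.1 h.2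
  exact div_pos (mul_pos (mul_pos two_pos hs) (sin_sub_mul_cos_pos h)) (pow_pos hs 4)

private lemma phi_strictMono :
    StrictMonoOn (fun θ : ℝ => (θ - sin θ * cos θ) / (sin θ) ^ 2) (Set.Ioo 0 π) := by
  apply strictMonoOn_of_deriv_pos (convex_Ioo 0 π)
  · apply ContinuousOn.div (by fun_prop) (by fun_prop)
    intro x hx
    exact pow_ne_zero 2 (Real.sin_pos_of_pos_of_lt_pi hx.1 hx.2).ne'
  · intro x hx
    rw [interior_Ioo] at hx
    rw [(phi_hasDerivAt hx).deriv]
    exact phi_deriv_pos hx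

private lemma phi_contOn :
    ContinuousOn (fun θ : ℝ => (θ - sin θ * cos θ) / (sin θ) ^ 2) (Set.Ioo 0 π) := by
  apply ContinuousOn.div (by fun_prop) (by fun_prop)
  intro x hx
  exact pow_ne_zero 2 (Real.sin_pos_of_pos_of_lt_pi hx.1 hx.2).ne'

private lemma phi_nonneg {θ : ℝ} (h : 0 < θ) :
    0 ≤ (θ - sin θ * cos θ) / (sin θ) ^ 2 := by
  apply div_nonneg _ (sq_nonneg _)
  have h1 := Real.sin_lt (by linarith : 0 < 2 * θ)
  have h2 : Real.sin (2 * θ) = 2 * Real.sin θ * Real.cos θ := Real.sin_two_mul θ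
  nlinarith

private lemma phi_le {θ : ℝ} (h : θ ∈ Set.Ioo 0 (1/2 : ℝ)) :
    (θ - sin θ * cos θ) / (sin θ) ^ 2 ≤ 2 * θ := by
  obtain ⟨h0, hhalf⟩ := h
  have hN : θ - Real.sin θ * Real.cos θ ≤ θ ^ 3 := by
    have h1 := Real.sin_gt_sub_cube (by linarith : 0 < 2 * θ)
    have h2 : Real.sin (2 * θ) = 2 * Real.sin θ * Real.cos θ := Real.sin_two_mul θ
    nlinarith [pow_pos h0 3]
  have hθ2 : θ ^ 2 ≤ 1 / 4 := by nlinarith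
  have hcube : θ ^ 3 / 4 ≤ θ / 16 := by nlinarith [mul_le_mul_of_nonneg_left hθ2 h0.le]
  have hs : 15 * θ / 16 ≤ Real.sin θ := by
    have h1 := Real.sin_gt_sub_cube h0
    linarith [pow_pos h0 3]
  have hD : θ ^ 2 / 2 ≤ (Real.sin θ) ^ 2 := by
    have := pow_le_pow_left₀ (by linarith : (0:ℝ) ≤ 15 * θ / 16) hs 2
    nlinarith
  calc (θ - sin θ * cos θ) / (sin θ) ^ 2 ≤ θ ^ 3 / (θ ^ 2 / 2) :=
        div_le_div₀ (by positivity) hN (by positivity) hD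
    _ = 2 * θ := by field_simp

private lemma phi_tendsto_zero :
    Tendsto (fun θ : ℝ => (θ - sin θ * cos θ) / (sin θ) ^ 2)
      (nhdsWithin 0 (Set.Ioi 0)) (nhds 0) := by
  have h1 : ∀ᶠ θ in nhdsWithin (0:ℝ) (Set.Ioi 0),
      0 ≤ (θ - sin θ * cos θ) / (sin θ) ^ 2 := by
    filter_upwards [self_mem_nhdsWithin] with θ hθ
    exact phi_nonneg hθ
  have h2 : ∀ᶠ θ in nhdsWithin (0:ℝ) (Set.Ioi 0),
      (θ - sin θ * cos θ) / (sin θ) ^ 2 ≤ 2 * θ := by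
    filter_upwards [Ioo_mem_nhdsGT_of_mem
      (by norm_num : (0:ℝ) ∈ Set.Ico (0:ℝ) (1/2))] with θ hθ
    exact phi_le hθ
  have h3 : Tendsto (fun θ : ℝ => 2 * θ) (nhdsWithin (0:ℝ) (Set.Ioi 0)) (nhds 0) := by
    have h : Tendsto (fun θ : ℝ => 2 * θ) (nhds 0) (nhds 0) := by
      simpa using (continuous_mul_left (2:ℝ)).tendsto (0:ℝ)
    exact h.mono_left nhdsWithin_le_nhds
  exact squeeze_zero' h1 h2 h3

private lemma phi_tendsto_atTop :
    Tendsto (fun θ : ℝ => (θ - sin θ * cos θ) / (sin θ) ^ 2)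
      (nhdsWithin π (Set.Iio π)) atTop := by
  have hnum : Tendsto (fun θ : ℝ => θ - Real.sin θ * Real.cos θ)
      (nhdsWithin π (Set.Iio π)) (nhds π) := by
    have hc : ContinuousAt (fun θ : ℝ => θ - Real.sin θ * Real.cos θ) π := by fun_prop
    have h := hc.tendsto.mono_left (nhdsWithin_le_nhds (s := Set.Iio π))
    simpa using h
  have hden : Tendsto (fun θ : ℝ => (Real.sin θ) ^ 2)
      (nhdsWithin π (Set.Iio π)) (nhdsWithin 0 (Set.Ioi 0)) := by
    rw [tendsto_nhdsWithin_iff]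
    constructor
    · have hc : ContinuousAt (fun θ : ℝ => (Real.sin θ) ^ 2) π := by fun_prop
      have h := hc.tendsto.mono_left (nhdsWithin_le_nhds (s := Set.Iio π))
      simpa using h
    · filter_upwards [Ioo_mem_nhdsLT_of_mem
        (⟨Real.pi_pos, le_refl π⟩ : π ∈ Set.Ioc (0:ℝ) π)] with θ hθ
      exact pow_pos (Real.sin_pos_of_pos_of_lt_pi hθ.1 hθ.2) 2
  have hinv : Tendsto (fun θ : ℝ => ((Real.sin θ) ^ 2)⁻¹)
      (nhdsWithin π (Set.Iio π)) atTop := tendsto_inv_nhdsGT_zero.comp hden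
  have h := Filter.Tendsto.pos_mul_atTop Real.pi_pos hnum hinv
  simpa [div_eq_mul_inv] using h

/-- well-definedness of θ(x) in the Brockett minimum-time
formula: the function φ(θ) = (θ − sin θ cos θ)/sin² θ is strictly increasing
on (0, π), tends to 0 as θ → 0⁺ and to +∞ as θ → π⁻; consequently, for all
r > 0 and z > 0 there is a unique θ ∈ (0, π) with φ(θ)·r² = 2z. -/
theorem brockett_theta_well_defined :
    StrictMonoOn (fun θ : ℝ => (θ - sin θ * cos θ) / (sin θ) ^ 2)
      (Set.Ioo 0 π) ∧
    Tendsto (fun θ : ℝ => (θ - sin θ * cos θ) / (sin θ) ^ 2)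
      (nhdsWithin 0 (Set.Ioi 0)) (nhds 0) ∧
    Tendsto (fun θ : ℝ => (θ - sin θ * cos θ) / (sin θ) ^ 2)
      (nhdsWithin π (Set.Iio π)) atTop ∧
    ∀ r z : ℝ, 0 < r → 0 < z →
      ∃! θ : ℝ, θ ∈ Set.Ioo 0 π ∧
        (θ - sin θ * cos θ) / (sin θ) ^ 2 * r ^ 2 = 2 * z := by
  refine ⟨phi_strictMono, phi_tendsto_zero, phi_tendsto_atTop, ?_⟩
  intro r z hr hz
  set φ := fun θ : ℝ => (θ - sin θ * cos θ) / (sin θ) ^ 2 with hφ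
  set t := 2 * z / r ^ 2 with ht
  have htpos : 0 < t := by positivity
  have hr2 : (r:ℝ) ^ 2 ≠ 0 := by positivity
  have hiff : ∀ θ : ℝ, (φ θ * r ^ 2 = 2 * z ↔ φ θ = t) := by
    intro θ
    rw [ht, eq_div_iff hr2]
  have hIooMem0 : Set.Ioo (0:ℝ) π ∈ nhdsWithin (0:ℝ) (Set.Ioi 0) :=
    Ioo_mem_nhdsGT_of_mem ⟨le_refl 0, Real.pi_pos⟩
  have hIooMemPi : Set.Ioo (0:ℝ) π ∈ nhdsWithin π (Set.Iio π) :=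
    Ioo_mem_nhdsLT_of_mem ⟨Real.pi_pos, le_refl π⟩
  have ha : ∃ a, a ∈ Set.Ioo (0:ℝ) π ∧ φ a < t := by
    have h1 : ∀ᶠ θ in nhdsWithin (0:ℝ) (Set.Ioi 0), φ θ < t :=
      phi_tendsto_zero.eventually_lt_const htpos
    exact ((eventually_of_mem hIooMem0 (fun x hx => hx)).and h1).exists
  have hb : ∃ b, b ∈ Set.Ioo (0:ℝ) π ∧ t < φ b := by
    have h1 : ∀ᶠ θ in nhdsWithin π (Set.Iio π), t < φ θ :=
      phi_tendsto_atTop.eventually_gt_atTop t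
    exact ((eventually_of_mem hIooMemPi (fun x hx => hx)).and h1).exists
  obtain ⟨a, haI, hat⟩ := ha
  obtain ⟨b, hbI, hbt⟩ := hb
  have hab : a < b := by
    by_contra hle
    push_neg at hle
    have := phi_strictMono.monotoneOn hbI haI hle
    exact absurd (lt_trans hat hbt) (not_lt.mpr this)
  have hsub : Set.Icc a b ⊆ Set.Ioo 0 π := fun x hx =>
    ⟨lt_of_lt_of_le haI.1 hx.1, lt_of_le_of_lt hx.2 hbI.2⟩
  have hcont : ContinuousOn φ (Set.Icc a b) := phi_contOn.mono hsub
  have hivt := intermediate_value_Ioo hab.le hcont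
  have hmem : t ∈ Set.Ioo (φ a) (φ b) := ⟨hat, hbt⟩
  obtain ⟨θ, hθab, hθval⟩ := hivt hmem
  have hθI : θ ∈ Set.Ioo 0 π := ⟨lt_trans haI.1 hθab.1, lt_trans hθab.2 hbI.2⟩
  refine ⟨θ, ⟨hθI, (hiff θ).mpr hθval⟩, ?_⟩
  rintro θ' ⟨hθ'I, hθ'eq⟩
  have hval' : φ θ' = t := (hiff θ').mp hθ'eq
  exact phi_strictMono.injOn hθ'I hθI (by show φ θ' = φ θ; rw [hval', hθval])
end
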